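/- arXiv:1312.4607 — 3 statements merged into one kernel-verified Lean document; each statement's English description precedes it below -/
import Mathlib

section
/- For every real number X ≥ √2 and every A ∈ SL(2, ℝ), the Frobenius norm bound ‖A‖_F ≤ X holds if and only if the hyperbolic distance from i to A·i is at most arcosh(X²/2). -/
open Matrix

/-- Inverse hyperbolic cosine: `arcosh x = log (x + √(x² − 1))`,
the inverse of `cosh` on `[1, ∞)`. -/
noncomputable def arcosh (x : ℝ) : ℝ :=
  Real.log (x + Real.sqrt (x ^ 2 - 1))

/-- Möbius action of a 2×2 real matrix on a point of the complex plane. -/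
noncomputable def moebius (A : Matrix (Fin 2) (Fin 2) ℝ) (z : ℂ) : ℂ :=
  ((A 0 0 : ℂ) * z + (A 0 1 : ℂ)) / ((A 1 0 : ℂ) * z + (A 1 1 : ℂ))

/-- Hyperbolic distance on the upper half-plane:
`d(z, w) = arcosh (1 + |z − w|² / (2 Im z Im w))`. -/
noncomputable def hypDist (z w : ℂ) : ℝ :=
  arcosh (1 + ‖z - w‖ ^ 2 / (2 * z.im * w.im))

/-- Frobenius norm of a 2×2 real matrix. -/
noncomputable def frobNorm (A : Matrix (Fin 2) (Fin 2) ℝ) : ℝ :=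
  Real.sqrt ((A 0 0) ^ 2 + (A 0 1) ^ 2 + (A 1 0) ^ 2 + (A 1 1) ^ 2)

/-! Writing `A = [[a, b], [c, d]]`, one computes `A·i = (ac + bd + i) / (c² + d²)`, and with
`ad − bc = 1` the argument of `arcosh` in `d(i, A·i)` simplifies to `(a² + b² + c² + d²) / 2`,
that is `cosh d(i, A·i) = ‖A‖_F² / 2`. Since `arcosh` is increasing, the claim reduces to
`‖A‖_F² ≤ X²`. -/

lemma arcosh_le_arcosh_iff {x y : ℝ} (hx : 0 < x) (hy : 0 < y) :
    arcosh x ≤ arcosh y ↔ x ≤ y :=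
  Real.arcosh_le_arcosh hx hy

lemma normSq_bottomRow_mul_I_add (A : Matrix (Fin 2) (Fin 2) ℝ) :
    Complex.normSq ((A 1 0 : ℂ) * Complex.I + (A 1 1 : ℂ)) = A 1 0 ^ 2 + A 1 1 ^ 2 := by
  rw [add_comm, Complex.normSq_add_mul_I, add_comm]

lemma moebius_I_re (A : Matrix (Fin 2) (Fin 2) ℝ) :
    (moebius A Complex.I).re = (A 0 0 * A 1 0 + A 0 1 * A 1 1) / (A 1 0 ^ 2 + A 1 1 ^ 2) := by
  rw [moebius, Complex.div_re, normSq_bottomRow_mul_I_add]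
  simp only [Complex.add_re, Complex.add_im, Complex.mul_re, Complex.mul_im, Complex.ofReal_re,
    Complex.ofReal_im, Complex.I_re, Complex.I_im]
  ring

lemma moebius_I_im (A : Matrix (Fin 2) (Fin 2) ℝ) :
    (moebius A Complex.I).im = A.det / (A 1 0 ^ 2 + A 1 1 ^ 2) := by
  rw [moebius, Complex.div_im, normSq_bottomRow_mul_I_add, Matrix.det_fin_two]
  simp only [Complex.add_re, Complex.add_im, Complex.mul_re, Complex.mul_im, Complex.ofReal_re,
    Complex.ofReal_im, Complex.I_re, Complex.I_im]
  ring

lemma sq_add_sq_bottomRow_pos (A : Matrix.SpecialLinearGroup (Fin 2) ℝ) :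
    0 < A.1 1 0 ^ 2 + A.1 1 1 ^ 2 := by
  have hdet := A.det_coe
  rw [Matrix.det_fin_two] at hdet
  by_contra! h
  have hc : A.1 1 0 = 0 := by nlinarith
  have hd : A.1 1 1 = 0 := by nlinarith
  simp [hc, hd] at hdet

lemma frobNorm_sq (A : Matrix (Fin 2) (Fin 2) ℝ) :
    frobNorm A ^ 2 = A 0 0 ^ 2 + A 0 1 ^ 2 + A 1 0 ^ 2 + A 1 1 ^ 2 :=
  Real.sq_sqrt (by positivity)

lemma frobNorm_pos (A : Matrix.SpecialLinearGroup (Fin 2) ℝ) : 0 < frobNorm A.1 :=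
  Real.sqrt_pos.2 <| by
    nlinarith [sq_add_sq_bottomRow_pos A, sq_nonneg (A.1 0 0), sq_nonneg (A.1 0 1)]

lemma hypDist_I_moebius_I (A : Matrix.SpecialLinearGroup (Fin 2) ℝ) :
    hypDist Complex.I (moebius A.1 Complex.I) = arcosh (frobNorm A.1 ^ 2 / 2) := by
  have hdet := A.det_coe
  have hpos := sq_add_sq_bottomRow_pos A
  rw [hypDist, frobNorm_sq, Complex.sq_norm, Complex.normSq_apply, Complex.sub_re,
    Complex.sub_im, moebius_I_re, moebius_I_im, hdet, Complex.I_re, Complex.I_im]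
  rw [Matrix.det_fin_two] at hdet
  congr 1
  field_simp
  linear_combination (-(1 + A.1 0 0 * A.1 1 1 - A.1 0 1 * A.1 1 0)) * hdet

/-- For `X ≥ √2` and `A ∈ SL(2, ℝ)`: `‖A‖_F ≤ X` iff the hyperbolic distance from
`i` to `A·i` is at most `arcosh(X²/2)`. -/
theorem frobNorm_le_iff_hypDist_le (X : ℝ) (hX : Real.sqrt 2 ≤ X)
    (A : Matrix.SpecialLinearGroup (Fin 2) ℝ) :
    frobNorm A.1 ≤ X ↔
      hypDist Complex.I (moebius A.1 Complex.I) ≤ arcosh (X ^ 2 / 2) := by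
  have hX₀ : 0 < X := (Real.sqrt_pos.2 two_pos).trans_le hX
  have hA₀ := frobNorm_pos A
  rw [hypDist_I_moebius_I, arcosh_le_arcosh_iff (by positivity) (by positivity),
    div_le_div_iff_of_pos_right two_pos, pow_le_pow_iff_left₀ hA₀.le hX₀.le two_ne_zero]
end

section
/- For every n ≥ 1, the number of integer lattice points in the Euclidean ball of radius X in ℝⁿ is asymptotic to vol(Bⁿ)·Xⁿ as X → ∞; that is, #{v ∈ ℤⁿ : ‖v‖₂ ≤ X} / Xⁿ → vol(Bⁿ), where vol(Bⁿ) is the Lebesgue volume of the unit Euclidean ball in ℝⁿ. -/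
/-!
The half-open unit cubes `∏ [vᵢ, vᵢ + 1)` at the integer points `v` tile `ℝⁿ`, each with
volume `1` and diameter `√n`. Hence the cubes at the lattice points of the closed ball of
radius `X` have total volume equal to their number, and their union lies between the balls of
radii `X - √n` and `X + √n`. These have volume `(X ± √n)ⁿ · vol(Bⁿ)`, and dividing by `Xⁿ`
squeezes the count to `vol(Bⁿ)`.
-/

open MeasureTheory Filter Metric Topology

lemma tendsto_add_pow_mul_div_pow (n : ℕ) (b c : ℝ) :
    Tendsto (fun X : ℝ => (X + b) ^ n * c / X ^ n) atTop (𝓝 c) := by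
  have h : Tendsto (fun X : ℝ => (1 + b / X) ^ n * c) atTop (𝓝 ((1 + 0) ^ n * c)) :=
    ((tendsto_const_nhds.add (tendsto_const_nhds.div_atTop tendsto_id)).pow n).mul_const c
  rw [add_zero, one_pow, one_mul] at h
  refine h.congr' ?_
  filter_upwards [eventually_ne_atTop 0] with X hX
  rw [one_add_div hX, div_pow, div_mul_eq_mul_div]

lemma tendsto_div_pow_of_le_of_le {f : ℝ → ℝ} {a c : ℝ} (n : ℕ)
    (hlow : ∀ᶠ X in atTop, (X - a) ^ n * c ≤ f X) (hup : ∀ᶠ X in atTop, f X ≤ (X + a) ^ n * c) :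
    Tendsto (fun X => f X / X ^ n) atTop (𝓝 c) := by
  refine tendsto_of_tendsto_of_tendsto_of_le_of_le' (tendsto_add_pow_mul_div_pow n (-a) c)
    (tendsto_add_pow_mul_div_pow n a c) ?_ ?_
  · filter_upwards [hlow, eventually_gt_atTop 0] with X hX hX₀
    rw [← sub_eq_add_neg]
    gcongr
  · filter_upwards [hup, eventually_gt_atTop 0] with X hX hX₀
    gcongr

section LatticeCount

variable {n : ℕ}

noncomputable def latticePoint (v : Fin n → ℤ) : EuclideanSpace ℝ (Fin n) :=
  WithLp.toLp 2 fun i => (v i : ℝ)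

lemma norm_latticePoint (v : Fin n → ℤ) : ‖latticePoint v‖ = √(∑ i, (v i : ℝ) ^ 2) := by
  simp [latticePoint, EuclideanSpace.norm_eq]

def unitCube (v : Fin n → ℤ) : Set (EuclideanSpace ℝ (Fin n)) :=
  WithLp.ofLp ⁻¹' Set.univ.pi fun i => Set.Ico (v i : ℝ) (v i + 1)

lemma mem_unitCube {x : EuclideanSpace ℝ (Fin n)} {v : Fin n → ℤ} :
    x ∈ unitCube v ↔ ∀ i, x i ∈ Set.Ico (v i : ℝ) (v i + 1) := by
  simp [unitCube]

lemma volume_unitCube (v : Fin n → ℤ) : volume (unitCube v) = 1 := by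
  rw [unitCube, (PiLp.volume_preserving_ofLp (Fin n)).measure_preimage
    (MeasurableSet.univ_pi fun _ => measurableSet_Ico).nullMeasurableSet, Real.volume_pi_Ico]
  simp

lemma measurableSet_unitCube (v : Fin n → ℤ) : MeasurableSet (unitCube v) :=
  (MeasurableSet.univ_pi fun _ => measurableSet_Ico).preimage
    (PiLp.volume_preserving_ofLp (Fin n)).measurable

lemma mem_unitCube_floor (x : EuclideanSpace ℝ (Fin n)) : x ∈ unitCube fun i => ⌊x i⌋ :=
  mem_unitCube.2 fun _ => ⟨Int.floor_le _, Int.lt_floor_add_one _⟩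

lemma eq_of_mem_unitCube {x : EuclideanSpace ℝ (Fin n)} {v w : Fin n → ℤ}
    (hv : x ∈ unitCube v) (hw : x ∈ unitCube w) : v = w := by
  funext i
  rw [← Int.floor_eq_iff.mpr (mem_unitCube.1 hv i), Int.floor_eq_iff.mpr (mem_unitCube.1 hw i)]

lemma dist_latticePoint_le {x : EuclideanSpace ℝ (Fin n)} {v : Fin n → ℤ}
    (hx : x ∈ unitCube v) : dist x (latticePoint v) ≤ √n := by
  rw [EuclideanSpace.dist_eq]
  gcongr
  calc ∑ i, dist (x i) (latticePoint v i) ^ 2 ≤ ∑ _i : Fin n, (1 : ℝ) := by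
        gcongr with i
        obtain ⟨h₀, h₁⟩ := mem_unitCube.1 hx i
        simp only [latticePoint, PiLp.toLp_apply]
        rw [Real.dist_eq, sq_abs, sq_le_one_iff_abs_le_one, abs_le]
        constructor <;> linarith
    _ = n := by simp

lemma volume_biUnion_unitCube {s : Set (Fin n → ℤ)} (hs : s.Finite) :
    volume (⋃ v ∈ s, unitCube v) = Nat.card s := by
  have hunion : ⋃ v ∈ s, unitCube v = ⋃ v ∈ hs.toFinset, unitCube v := by simp
  rw [hunion, measure_biUnion_finset
    (fun v _ w _ hvw => Set.disjoint_left.2 fun _ hv hw => hvw (eq_of_mem_unitCube hv hw))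
    (fun v _ => measurableSet_unitCube v)]
  simp [volume_unitCube, Nat.card_eq_card_finite_toFinset hs]

lemma finite_latticePoint_mem_closedBall (X : ℝ) :
    {v : Fin n → ℤ | latticePoint v ∈ closedBall 0 X}.Finite := by
  refine (Set.finite_Icc (-fun _ => ⌈X⌉) fun _ => ⌈X⌉).subset fun v hv => ?_
  have hv' : ∀ i, |v i| ≤ ⌈X⌉ := fun i => by
    have := (PiLp.norm_apply_le (latticePoint v) i).trans (mem_closedBall_zero_iff.1 hv)
    exact_mod_cast (by simpa [latticePoint] using this : |(v i : ℝ)| ≤ X).trans (Int.le_ceil X)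
  exact ⟨fun i => neg_le_of_abs_le (hv' i), fun i => le_of_abs_le (hv' i)⟩

lemma closedBall_sub_sqrt_subset_biUnion_unitCube (X : ℝ) :
    closedBall 0 (X - √n) ⊆
      ⋃ v ∈ {v : Fin n → ℤ | latticePoint v ∈ closedBall 0 X}, unitCube v := by
  intro x hx
  refine Set.mem_biUnion (x := fun i => ⌊x i⌋) ?_ (mem_unitCube_floor x)
  calc dist (latticePoint _) 0 ≤ dist x (latticePoint _) + dist x 0 := dist_triangle_left _ _ _
    _ ≤ √n + (X - √n) := add_le_add (dist_latticePoint_le (mem_unitCube_floor x)) hx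
    _ = X := by ring

lemma biUnion_unitCube_subset_closedBall_add_sqrt (X : ℝ) :
    ⋃ v ∈ {v : Fin n → ℤ | latticePoint v ∈ closedBall 0 X}, unitCube v ⊆
      closedBall 0 (X + √n) := by
  simp only [Set.iUnion_subset_iff]
  intro v hv x hx
  calc dist x 0 ≤ dist x (latticePoint v) + dist (latticePoint v) 0 := dist_triangle _ _ _
    _ ≤ √n + X := add_le_add (dist_latticePoint_le hx) hv
    _ = X + √n := add_comm _ _

lemma volume_real_closedBall_sub_sqrt_le_card (X : ℝ) :
    volume.real (closedBall (0 : EuclideanSpace ℝ (Fin n)) (X - √n)) ≤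
      Nat.card {v : Fin n → ℤ | latticePoint v ∈ closedBall 0 X} := by
  have h := measure_mono (μ := volume)
    (closedBall_sub_sqrt_subset_biUnion_unitCube (n := n) X)
  rw [volume_biUnion_unitCube (finite_latticePoint_mem_closedBall X)] at h
  simpa [measureReal_def] using ENNReal.toReal_mono (ENNReal.natCast_ne_top _) h

lemma card_le_volume_real_closedBall_add_sqrt (X : ℝ) :
    Nat.card {v : Fin n → ℤ | latticePoint v ∈ closedBall 0 X} ≤
      volume.real (closedBall (0 : EuclideanSpace ℝ (Fin n)) (X + √n)) := by
  have h := measure_mono (μ := volume)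
    (biUnion_unitCube_subset_closedBall_add_sqrt (n := n) X)
  rw [volume_biUnion_unitCube (finite_latticePoint_mem_closedBall X)] at h
  simpa [measureReal_def] using ENNReal.toReal_mono measure_closedBall_lt_top.ne h

end LatticeCount

theorem lattice_points_in_ball_asymptotic_general (n : ℕ) :
    Tendsto
      (fun X : ℝ =>
        (Nat.card {v : Fin n → ℤ | Real.sqrt (∑ i, ((v i : ℝ)) ^ 2) ≤ X} : ℝ) / X ^ n)
      atTop
      (nhds ((volume (Metric.closedBall (0 : EuclideanSpace ℝ (Fin n)) 1)).toReal)) := by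
  rw [← measureReal_def]
  simp_rw [← norm_latticePoint, ← mem_closedBall_zero_iff]
  have hball : ∀ r : ℝ, 0 ≤ r → volume.real (closedBall (0 : EuclideanSpace ℝ (Fin n)) r) =
      r ^ n * volume.real (closedBall (0 : EuclideanSpace ℝ (Fin n)) 1) := fun r hr => by
    rw [Measure.addHaar_real_closedBall' _ _ hr, finrank_euclideanSpace_fin]
  refine tendsto_div_pow_of_le_of_le n (a := √n) ?_ ?_
  · filter_upwards [eventually_ge_atTop √n] with X hX
    rw [← hball _ (sub_nonneg.2 hX)]
    exact volume_real_closedBall_sub_sqrt_le_card X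
  · filter_upwards [eventually_ge_atTop 0] with X hX
    rw [← hball _ (by positivity)]
    exact card_le_volume_real_closedBall_add_sqrt X

/-- The number of integer lattice points in the Euclidean ball of radius `X` in `ℝⁿ` is
asymptotic to `vol(Bⁿ)·Xⁿ` as `X → ∞`:
`#{v ∈ ℤⁿ : ‖v‖₂ ≤ X} / Xⁿ → vol(Bⁿ)`. -/
theorem lattice_points_in_ball_asymptotic (n : ℕ) (hn : 1 ≤ n) :
    Tendsto
      (fun X : ℝ =>
        (Nat.card {v : Fin n → ℤ | Real.sqrt (∑ i, ((v i : ℝ)) ^ 2) ≤ X} : ℝ) / X ^ n)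
      atTop
      (nhds ((volume (Metric.closedBall (0 : EuclideanSpace ℝ (Fin n)) 1)).toReal)) :=
  lattice_points_in_ball_asymptotic_general n
end

section
/- The rational numbers in [0, 1] with denominator at most Q equidistribute as Q → ∞: letting F_Q = {p/q : 0 ≤ p ≤ q ≤ Q, gcd(p, q) = 1} be the set of Farey fractions of order Q, for every continuous function f : [0, 1] → ℝ one has (1/|F_Q|) · Σ_{r ∈ F_Q} f(r) → ∫₀¹ f(x) dx as Q → ∞. -/
/-!
Write `T_k(g) = ∑_{m=0}^{k} g(m/k)` for the Riemann sums on the grid `(1/k)ℤ ∩ [0, 1]`. Detecting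
`gcd(p, q) = 1` by `∑_{d ∣ gcd(p, q)} μ(d)` turns the Farey sum of denominator `q` into
`∑_{d ∣ q} μ(d) T_{q/d}(g)`, and reordering the sum over `q ≤ Q` gives
`∑_{r ∈ F_Q} g(r) = ∑_{d ≤ Q} μ(d) ∑_{k ≤ Q/d} T_k(g) = ∑_{k ≤ Q} M(Q/k) T_k(g)` with
`M(x) = ∑_{d ≤ x} μ(d)`. If `∫₀¹ g = 0` then `T_k(g) = o(k)`, so already the trivial bound
`|M(x)| ≤ x` gives `∑_{r ∈ F_Q} g(r) = o(Q²)`. For `g = 1` the first expansion gives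
`|F_Q| ≥ (1 - ∑_{d ≥ 2} d⁻²) Q²/2 - O(Q log Q)`, and `∑_{d ≥ 2} d⁻² = π²/6 - 1 < 1`.
Applying the first bound to `g = f - ∫₀¹ f` proves the theorem.
-/

open Filter Finset Topology Asymptotics MeasureTheory ArithmeticFunction Real
open scoped ArithmeticFunction.Moebius

lemma abs_integral_sub_mul_le {g : ℝ → ℝ} {a b y ε : ℝ} (hab : a ≤ b)
    (hg : IntervalIntegrable g volume a b) (h : ∀ x ∈ Set.Ioc a b, |g x - y| ≤ ε) :
    |(∫ x in a..b, g x) - (b - a) * y| ≤ ε * (b - a) := by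
  have hconst : (b - a) * y = ∫ _ in a..b, y := by simp
  calc |(∫ x in a..b, g x) - (b - a) * y| = ‖∫ x in a..b, (g x - y)‖ := by
        rw [hconst, intervalIntegral.integral_sub hg intervalIntegrable_const, Real.norm_eq_abs]
    _ ≤ ε * |b - a| := intervalIntegral.norm_integral_le_of_norm_le_const fun x hx =>
        (Real.norm_eq_abs _).trans_le (h x (Set.uIoc_of_le hab ▸ hx))
    _ = ε * (b - a) := by rw [abs_of_nonneg (sub_nonneg.2 hab)]

lemma abs_riemannSum_sub_integral_le {g : ℝ → ℝ} (hg : ContinuousOn g (Set.Icc 0 1)) {k : ℕ}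
    (hk : k ≠ 0) {ε : ℝ}
    (hε : ∀ x ∈ Set.Icc (0 : ℝ) 1, ∀ y ∈ Set.Icc (0 : ℝ) 1, dist x y ≤ 1 / k →
      dist (g x) (g y) ≤ ε) :
    |(∑ m ∈ range k, g ((m + 1) / k)) / k - ∫ x in (0 : ℝ)..1, g x| ≤ ε := by
  have hk0 : (0 : ℝ) < k := by positivity
  set a : ℕ → ℝ := fun m => m / k with ha
  have hstep : ∀ m, a (m + 1) - a m = 1 / k := fun m => by simp only [ha]; push_cast; ring
  have hsub : ∀ m < k, Set.Icc (a m) (a (m + 1)) ⊆ Set.Icc 0 1 := fun m hm =>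
    Set.Icc_subset_Icc (by positivity) ((div_le_one hk0).2 (by exact_mod_cast hm))
  have hint : ∀ m < k, IntervalIntegrable g volume (a m) (a (m + 1)) := fun m hm =>
    (hg.mono (hsub m hm)).intervalIntegrable_of_Icc (by linarith [hstep m, one_div_pos.2 hk0])
  have hpiece : ∀ m < k, |(∫ x in a m..a (m + 1), g x) - (a (m + 1) - a m) * g (a (m + 1))|
      ≤ ε * (a (m + 1) - a m) := by
    intro m hm
    have hle : a m ≤ a (m + 1) := by linarith [hstep m, one_div_pos.2 hk0]
    refine abs_integral_sub_mul_le hle (hint m hm) fun x hx => ?_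
    have hx' : x ∈ Set.Icc (a m) (a (m + 1)) := Set.Ioc_subset_Icc_self hx
    rw [← Real.dist_eq]
    refine hε _ (hsub m hm hx') _ (hsub m hm (Set.right_mem_Icc.2 hle)) ?_
    rw [Real.dist_eq, abs_sub_comm, abs_of_nonneg (by linarith [hx'.2]), ← hstep m]
    linarith [hx'.1]
  have hI : ∫ x in (0 : ℝ)..1, g x = ∑ m ∈ range k, ∫ x in a m..a (m + 1), g x := by
    rw [intervalIntegral.sum_integral_adjacent_intervals hint]
    simp [ha, hk0.ne']
  calc |(∑ m ∈ range k, g ((m + 1) / k)) / k - ∫ x in (0 : ℝ)..1, g x|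
      = |∑ m ∈ range k, ((∫ x in a m..a (m + 1), g x) - (a (m + 1) - a m) * g (a (m + 1)))| := by
        rw [hI, abs_sub_comm, sum_div, ← sum_sub_distrib]
        refine congrArg abs (sum_congr rfl fun m _ => ?_)
        rw [hstep]
        simp only [ha]
        push_cast
        ring
    _ ≤ ∑ m ∈ range k, ε * (a (m + 1) - a m) :=
        (abs_sum_le_sum_abs _ _).trans (sum_le_sum fun m hm => hpiece m (mem_range.1 hm))
    _ = ε := by simp only [hstep, sum_const, card_range, nsmul_eq_mul]; field_simp

lemma tendsto_riemannSum {g : ℝ → ℝ} (hg : ContinuousOn g (Set.Icc 0 1)) :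
    Tendsto (fun k : ℕ => (∑ m ∈ range k, g ((m + 1) / k)) / k) atTop
      (𝓝 (∫ x in (0 : ℝ)..1, g x)) := by
  rw [Metric.tendsto_atTop]
  intro ε hε
  obtain ⟨δ, hδ, hδg⟩ := Metric.uniformContinuousOn_iff_le.1
    (isCompact_Icc.uniformContinuousOn_of_continuous hg) (ε / 2) (half_pos hε)
  obtain ⟨N, hN⟩ := exists_nat_one_div_lt hδ
  refine ⟨N + 1, fun k hk => ?_⟩
  have hkN : (N : ℝ) + 1 ≤ k := by exact_mod_cast hk
  rw [Real.dist_eq]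
  refine (abs_riemannSum_sub_integral_le hg (by omega) fun x hx y hy hxy => hδg x hx y hy ?_)
    |>.trans_lt (half_lt_self hε)
  exact hxy.trans ((one_div_le_one_div_of_le (by positivity) hkN).trans hN.le)

lemma isLittleO_sum_Ioc_of_tendsto_zero {u : ℕ → ℝ} (hu : Tendsto u atTop (𝓝 0)) :
    (fun n => ∑ k ∈ Ioc 0 n, u k) =o[atTop] (fun n => (n : ℝ)) := by
  refine (isLittleO_sum_range_of_tendsto_zero ((tendsto_add_atTop_iff_nat 1).2 hu)).congr_left
    fun n => ?_
  rw [range_eq_Ico, sum_Ico_add', Ico_add_one_add_one_eq_Ioc]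

lemma sum_range_filter_dvd {M : Type*} [AddCommMonoid M] (h : ℕ → M) (n : ℕ) {d : ℕ}
    (hd : d ≠ 0) :
    ∑ p ∈ range (n + 1) with d ∣ p, h p = ∑ m ∈ range (n / d + 1), h (d * m) := by
  have : {p ∈ range (n + 1) | d ∣ p} = (range (n / d + 1)).image (d * ·) := by
    ext p
    simp only [mem_filter, mem_range, mem_image, Nat.lt_succ_iff, Nat.le_div_iff_mul_le
      (Nat.pos_of_ne_zero hd)]
    constructor
    · rintro ⟨hp, m, rfl⟩
      exact ⟨m, by linarith, rfl⟩
    · rintro ⟨m, hm, rfl⟩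
      exact ⟨by linarith, dvd_mul_right d m⟩
  rw [this, sum_image fun _ _ _ _ h => Nat.eq_of_mul_eq_mul_left (Nat.pos_of_ne_zero hd) h]

lemma ite_coprime_eq_sum_moebius {n : ℕ} (hn : n ≠ 0) (p : ℕ) :
    (if Nat.gcd p n = 1 then 1 else 0 : ℝ) = ∑ d ∈ n.divisors with d ∣ p, (μ d : ℝ) := by
  have hdiv : {d ∈ n.divisors | d ∣ p} = (Nat.gcd p n).divisors := by
    rw [← Nat.divisors_filter_dvd_of_dvd hn (Nat.gcd_dvd_right p n)]
    ext d
    simp +contextual [Nat.dvd_gcd_iff]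
  simp_rw [hdiv, ← intCoe_apply (R := ℝ)]
  rw [← coe_mul_zeta_apply, coe_moebius_mul_coe_zeta, one_apply]

lemma abs_sum_moebius_le (n : ℕ) : |∑ d ∈ Ioc 0 n, (μ d : ℝ)| ≤ n :=
  calc |∑ d ∈ Ioc 0 n, (μ d : ℝ)| ≤ ∑ d ∈ Ioc 0 n, |(μ d : ℝ)| := abs_sum_le_sum_abs _ _
    _ ≤ ∑ _d ∈ Ioc 0 n, (1 : ℝ) := sum_le_sum fun d _ => by exact_mod_cast abs_moebius_le_one
    _ = n := by simp

lemma sum_Ioc_one_inv_sq_le (n : ℕ) : ∑ d ∈ Ioc 1 n, 1 / (d : ℝ) ^ 2 ≤ π ^ 2 / 6 - 1 := by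
  have h := sum_le_hasSum (insert 1 (Ioc 1 n)) (fun _ _ => by positivity) hasSum_zeta_two
  rw [sum_insert (by simp), Nat.cast_one, one_pow, div_one] at h
  linarith

noncomputable def gridSum (g : ℝ → ℝ) : ArithmeticFunction ℝ :=
  ⟨fun k => if k = 0 then 0 else ∑ m ∈ range (k + 1), g (m / k), if_pos rfl⟩

lemma gridSum_apply (g : ℝ → ℝ) {k : ℕ} (hk : k ≠ 0) :
    gridSum g k = ∑ m ∈ range (k + 1), g (m / k) := if_neg hk

noncomputable def fareyTerm (g : ℝ → ℝ) : ArithmeticFunction ℝ :=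
  ⟨fun q => ∑ p ∈ range (q + 1) with Nat.gcd p q = 1, g (p / q), by simp⟩

lemma fareyTerm_apply (g : ℝ → ℝ) (q : ℕ) :
    fareyTerm g q = ∑ p ∈ range (q + 1) with Nat.gcd p q = 1, g (p / q) := rfl

theorem fareyTerm_eq_moebius_mul_gridSum (g : ℝ → ℝ) :
    fareyTerm g = (μ : ArithmeticFunction ℝ) * gridSum g := by
  ext n
  rcases eq_or_ne n 0 with rfl | hn
  · simp
  simp only [mul_apply, intCoe_apply]
  rw [Nat.sum_divisorsAntidiagonal fun d e => (μ d : ℝ) * gridSum g e, fareyTerm_apply,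
    sum_filter]
  calc ∑ p ∈ range (n + 1), (if Nat.gcd p n = 1 then g (p / n) else 0)
      = ∑ p ∈ range (n + 1), ∑ d ∈ n.divisors, if d ∣ p then (μ d : ℝ) * g (p / n) else 0 := by
        refine sum_congr rfl fun p _ => ?_
        rw [← sum_filter, ← sum_mul, ← ite_coprime_eq_sum_moebius hn, ite_mul, one_mul, zero_mul]
    _ = ∑ d ∈ n.divisors, (μ d : ℝ) * gridSum g (n / d) := by
        rw [sum_comm]
        refine sum_congr rfl fun d hd => ?_
        obtain ⟨⟨e, rfl⟩, -⟩ := Nat.mem_divisors.1 hd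
        have hd0 : d ≠ 0 := left_ne_zero_of_mul hn
        have he0 : e ≠ 0 := right_ne_zero_of_mul hn
        rw [← sum_filter, ← mul_sum, sum_range_filter_dvd _ _ hd0, Nat.mul_div_cancel_left _
          (Nat.pos_of_ne_zero hd0), gridSum_apply _ he0]
        congr 1
        refine sum_congr rfl fun m _ => ?_
        push_cast
        rw [mul_div_mul_left _ _ (by exact_mod_cast hd0)]

noncomputable def fareySum (g : ℝ → ℝ) (Q : ℕ) : ℝ := ∑ q ∈ Ioc 0 Q, fareyTerm g q

lemma fareySum_eq_sum_ite (g : ℝ → ℝ) (Q : ℕ) :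
    fareySum g Q = ∑ q ∈ Icc 1 Q, ∑ p ∈ range (q + 1),
      if Nat.gcd p q = 1 then g ((p : ℝ) / (q : ℝ)) else 0 := by
  simp only [fareySum, fareyTerm_apply, sum_filter]
  rfl

lemma fareySum_sub_const (g : ℝ → ℝ) (c : ℝ) (Q : ℕ) :
    fareySum (fun x => g x - c) Q = fareySum g Q - c * fareySum (fun _ => 1) Q := by
  simp only [fareySum, fareyTerm_apply, sum_sub_distrib, sum_const, nsmul_eq_mul, sum_mul,
    mul_one, mul_comm c]

lemma fareySum_eq_sum_gridSum_mul (g : ℝ → ℝ) (Q : ℕ) :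
    fareySum g Q = ∑ k ∈ Ioc 0 Q, gridSum g k * ∑ d ∈ Ioc 0 (Q / k), (μ d : ℝ) := by
  rw [fareySum, fareyTerm_eq_moebius_mul_gridSum, mul_comm, sum_Ioc_mul_eq_sum_sum]
  simp only [intCoe_apply]

lemma fareySum_eq_sum_moebius_mul (g : ℝ → ℝ) (Q : ℕ) :
    fareySum g Q = ∑ d ∈ Ioc 0 Q, (μ d : ℝ) * ∑ k ∈ Ioc 0 (Q / d), gridSum g k := by
  rw [fareySum, fareyTerm_eq_moebius_mul_gridSum, sum_Ioc_mul_eq_sum_sum]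
  simp only [intCoe_apply]

lemma tendsto_gridSum_div {g : ℝ → ℝ} (hg : ContinuousOn g (Set.Icc 0 1)) :
    Tendsto (fun k : ℕ => gridSum g k / k) atTop (𝓝 (∫ x in (0 : ℝ)..1, g x)) := by
  have h := (tendsto_const_div_atTop_nhds_zero_nat (g 0)).add (tendsto_riemannSum hg)
  rw [zero_add] at h
  refine h.congr' ?_
  filter_upwards [eventually_ne_atTop 0] with k hk
  rw [gridSum_apply g hk, sum_range_succ', add_div, add_comm]
  push_cast
  simp

lemma abs_fareySum_le (g : ℝ → ℝ) (Q : ℕ) :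
    |fareySum g Q| ≤ Q * ∑ k ∈ Ioc 0 Q, |gridSum g k| / k := by
  rw [fareySum_eq_sum_gridSum_mul, mul_sum]
  refine (abs_sum_le_sum_abs _ _).trans (sum_le_sum fun k _ => ?_)
  calc |gridSum g k * ∑ d ∈ Ioc 0 (Q / k), (μ d : ℝ)|
      ≤ |gridSum g k| * (Q / k) := by
        rw [abs_mul]
        gcongr
        exact (abs_sum_moebius_le _).trans Nat.cast_div_le
    _ = Q * (|gridSum g k| / k) := by ring

theorem isLittleO_fareySum {g : ℝ → ℝ} (hg : ContinuousOn g (Set.Icc 0 1))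
    (h0 : ∫ x in (0 : ℝ)..1, g x = 0) :
    fareySum g =o[atTop] fun Q => (Q : ℝ) ^ 2 := by
  have hδ : Tendsto (fun k : ℕ => |gridSum g k| / k) atTop (𝓝 0) := by
    simpa [h0, abs_div] using (tendsto_gridSum_div hg).abs
  have hsum := (isBigO_refl (fun Q : ℕ => (Q : ℝ)) atTop).mul_isLittleO
    (isLittleO_sum_Ioc_of_tendsto_zero hδ)
  refine (IsBigO.of_bound 1 (Eventually.of_forall fun Q => ?_)).trans_isLittleO
    (hsum.congr_right fun Q => (sq _).symm)
  rw [one_mul, Real.norm_eq_abs, Real.norm_eq_abs]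
  exact (abs_fareySum_le g Q).trans (le_abs_self _)

lemma sum_gridSum_one (N : ℕ) :
    ∑ k ∈ Ioc 0 N, gridSum (fun _ => 1) k = N * (N + 3) / 2 := by
  induction N with
  | zero => simp
  | succ n ih =>
    rw [sum_Ioc_succ_top (Nat.zero_le n), ih, gridSum_apply _ n.succ_ne_zero]
    simp only [sum_const, card_range, nsmul_eq_mul, mul_one]
    push_cast
    ring

lemma abs_moebius_mul_sum_gridSum_one_le (Q d : ℕ) :
    |(μ d : ℝ) * ∑ k ∈ Ioc 0 (Q / d), gridSum (fun _ => 1) k| ≤ (Q / d) * (Q / d + 3) / 2 := by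
  have hN : ((Q / d : ℕ) : ℝ) ≤ Q / d := Nat.cast_div_le
  rw [sum_gridSum_one, abs_mul,
    abs_of_nonneg (by positivity : (0 : ℝ) ≤ (Q / d : ℕ) * ((Q / d : ℕ) + 3) / 2)]
  calc |(μ d : ℝ)| * (((Q / d : ℕ) : ℝ) * ((Q / d : ℕ) + 3) / 2)
      ≤ 1 * (((Q / d : ℕ) : ℝ) * ((Q / d : ℕ) + 3) / 2) := by
        gcongr
        exact_mod_cast abs_moebius_le_one
    _ ≤ (Q / d) * (Q / d + 3) / 2 := by rw [one_mul]; gcongr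

lemma fareySum_one_ge (Q : ℕ) :
    (2 - π ^ 2 / 6) / 2 * Q ^ 2 - 3 / 2 * Q * ∑ d ∈ Ioc 0 Q, 1 / (d : ℝ)
      ≤ fareySum (fun _ => 1) Q := by
  rcases Nat.eq_zero_or_pos Q with rfl | hQ
  · simp [fareySum]
  have htail : -((Q : ℝ) ^ 2 / 2 * ∑ d ∈ Ioc 1 Q, 1 / (d : ℝ) ^ 2
        + 3 / 2 * Q * ∑ d ∈ Ioc 1 Q, 1 / (d : ℝ))
      ≤ ∑ d ∈ Ioc 1 Q, (μ d : ℝ) * ∑ k ∈ Ioc 0 (Q / d), gridSum (fun _ => 1) k := by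
    rw [mul_sum, mul_sum, ← sum_add_distrib, ← sum_neg_distrib]
    refine sum_le_sum fun d _ => ?_
    have hexpand : (Q : ℝ) ^ 2 / 2 * (1 / (d : ℝ) ^ 2) + 3 / 2 * Q * (1 / d)
        = (Q / d) * (Q / d + 3) / 2 := by ring
    exact hexpand ▸ (abs_le.1 (abs_moebius_mul_sum_gridSum_one_le Q d)).1
  have hinvsq := mul_le_mul_of_nonneg_left (sum_Ioc_one_inv_sq_le Q)
    (by positivity : (0 : ℝ) ≤ Q ^ 2 / 2)
  have hharm := mul_le_mul_of_nonneg_left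
    (sum_le_sum_of_subset_of_nonneg (Ioc_subset_Ioc_left zero_le_one)
      fun d _ _ => by positivity : ∑ d ∈ Ioc 1 Q, 1 / (d : ℝ) ≤ ∑ d ∈ Ioc 0 Q, 1 / (d : ℝ))
    (by positivity : (0 : ℝ) ≤ 3 / 2 * Q)
  have hhead : ∑ d ∈ Ioc 0 1, (μ d : ℝ) * ∑ k ∈ Ioc 0 (Q / d), gridSum (fun _ => 1) k
      = Q * (Q + 3) / 2 := by
    simp [sum_gridSum_one]
  rw [fareySum_eq_sum_moebius_mul, ← sum_Ioc_consecutive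
    (fun d => (μ d : ℝ) * ∑ k ∈ Ioc 0 (Q / d), gridSum (fun _ => 1) k) zero_le_one hQ, hhead]
  nlinarith

lemma isBigO_sq_fareySum_one : (fun Q : ℕ => (Q : ℝ) ^ 2) =O[atTop] fareySum fun _ => 1 := by
  have hlow := fareySum_one_ge
  have hc : 0 < (2 - π ^ 2 / 6) / 2 := by nlinarith [pi_lt_d2, pi_pos]
  set c := (2 - π ^ 2 / 6) / 2
  have hharm := (isLittleO_sum_Ioc_of_tendsto_zero tendsto_one_div_atTop_nhds_zero_nat).bound
    (by positivity : 0 < c / 3)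
  refine IsBigO.of_bound (2 / c) ?_
  filter_upwards [hharm] with Q hQ
  rw [Real.norm_eq_abs, Real.norm_eq_abs, Nat.abs_cast,
    abs_of_nonneg (sum_nonneg fun d _ => by positivity)] at hQ
  have hS : c / 2 * Q ^ 2 ≤ fareySum (fun _ => 1) Q := by
    nlinarith [hlow Q, mul_le_mul_of_nonneg_left hQ (by positivity : (0 : ℝ) ≤ 3 / 2 * Q)]
  calc ‖(Q : ℝ) ^ 2‖ = 2 / c * (c / 2 * Q ^ 2) := by
        rw [Real.norm_eq_abs, abs_of_nonneg (by positivity)]; field_simp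
    _ ≤ 2 / c * ‖fareySum (fun _ => 1) Q‖ := by gcongr; exact hS.trans (le_abs_self _)

/-- Equidistribution of Farey fractions: for the set
`F_Q = {p/q : 0 ≤ p ≤ q ≤ Q, gcd(p, q) = 1}` of Farey fractions of order `Q` and any
continuous `f : [0, 1] → ℝ`, the averages `(1/|F_Q|) Σ_{r ∈ F_Q} f(r)` converge to
`∫₀¹ f` as `Q → ∞`. -/
theorem farey_fractions_equidistribute (f : ℝ → ℝ)
    (hf : ContinuousOn f (Set.Icc 0 1)) :
    Tendsto
      (fun Q : ℕ =>
        (∑ q ∈ Finset.Icc 1 Q, ∑ p ∈ Finset.range (q + 1),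
            if Nat.gcd p q = 1 then f ((p : ℝ) / (q : ℝ)) else 0) /
        (∑ q ∈ Finset.Icc 1 Q, ∑ p ∈ Finset.range (q + 1),
            if Nat.gcd p q = 1 then (1 : ℝ) else 0))
      atTop (nhds (∫ x in (0 : ℝ)..1, f x)) := by
  set I := ∫ x in (0 : ℝ)..1, f x
  have hg : ContinuousOn (fun x => f x - I) (Set.Icc 0 1) := hf.sub continuousOn_const
  have hg0 : ∫ x in (0 : ℝ)..1, (f x - I) = 0 := by
    simp [intervalIntegral.integral_sub (hf.intervalIntegrable_of_Icc zero_le_one)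
      intervalIntegrable_const, I]
  have hlim := (((isLittleO_fareySum hg hg0).trans_isBigO isBigO_sq_fareySum_one)
    |>.tendsto_div_nhds_zero).const_add I
  rw [add_zero] at hlim
  refine hlim.congr' ?_
  filter_upwards [isBigO_sq_fareySum_one.eq_zero_imp, eventually_ne_atTop 0] with Q hQ hQ0
  have hne : fareySum (fun _ => 1) Q ≠ 0 := fun h => hQ0 (by simpa using hQ h)
  rw [← fareySum_eq_sum_ite, ← fareySum_eq_sum_ite (fun _ => 1), fareySum_sub_const]
  field_simp
  ring
end
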